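/- ℒ(RNFAwtl) = ℒ(NFAwtl): the repetitive nondeterministic finite automata with translucent letters accept exactly the same languages as ordinary NFAwtls. -/

import Mathlib

/-- A nondeterministic finite automaton with translucent letters (NFAwtl). -/
structure NFAwtl (Q α : Type) where
  τ : Q → Set α
  I : Set Q
  F : Set Q
  δ : Q → α → Set Q
  tr : ∀ q a, a ∈ τ q → δ q a = ∅

namespace NFAwtl

variable {Q α : Type}

/-- One computation step of an NFAwtl: delete the leftmost non-translucent letter
and change state (the head returns to the left end). -/
def Step (A : NFAwtl Q α) : Q × List α → Q × List α → Prop := fun c c' =>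
  ∃ u a v, c.2 = u ++ a :: v ∧ (∀ x ∈ u, x ∈ A.τ c.1) ∧ a ∉ A.τ c.1 ∧
    c'.1 ∈ A.δ c.1 a ∧ c'.2 = u ++ v

/-- Acceptance: from some initial state, reach a configuration whose remaining
letters are all translucent for a final state. -/
def Accepts (A : NFAwtl Q α) (w : List α) : Prop :=
  ∃ q₀ ∈ A.I, ∃ q w', Relation.ReflTransGen A.Step (q₀, w) (q, w') ∧
    (∀ x ∈ w', x ∈ A.τ q) ∧ q ∈ A.F

def lang (A : NFAwtl Q α) : Set (List α) := { w | A.Accepts w }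

/-- A DFAwtl: single initial state and at most one transition per state/letter. -/
def Deterministic (A : NFAwtl Q α) : Prop :=
  (∃ q₀, A.I = {q₀}) ∧ ∀ q a, (A.δ q a).Subsingleton

end NFAwtl

/-- A repetitive NFAwtl (RNFAwtl): on the end-of-tape marker it may accept
(states in `Facc`) or change state via `δend` and continue. -/
structure RNFAwtl (Q α : Type) where
  τ : Q → Set α
  I : Set Q
  δ : Q → α → Set Q
  δend : Q → Set Q
  Facc : Set Q
  tr : ∀ q a, a ∈ τ q → δ q a = ∅
  accEnd : ∀ q, q ∈ Facc → δend q = ∅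

namespace RNFAwtl

variable {Q α : Type}

/-- One computation step of an RNFAwtl: either delete the leftmost
non-translucent letter, or, when all remaining letters are translucent,
change state via a `◁`-transition and continue. -/
def Step (A : RNFAwtl Q α) : Q × List α → Q × List α → Prop := fun c c' =>
  (∃ u a v, c.2 = u ++ a :: v ∧ (∀ x ∈ u, x ∈ A.τ c.1) ∧ a ∉ A.τ c.1 ∧
    c'.1 ∈ A.δ c.1 a ∧ c'.2 = u ++ v)
  ∨ ((∀ x ∈ c.2, x ∈ A.τ c.1) ∧ c'.1 ∈ A.δend c.1 ∧ c'.2 = c.2)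

def Accepts (A : RNFAwtl Q α) (w : List α) : Prop :=
  ∃ q₀ ∈ A.I, ∃ q w', Relation.ReflTransGen A.Step (q₀, w) (q, w') ∧
    (∀ x ∈ w', x ∈ A.τ q) ∧ q ∈ A.Facc

def lang (A : RNFAwtl Q α) : Set (List α) := { w | A.Accepts w }

/-- An RDFAwtl: single initial state and deterministic transitions. -/
def Deterministic (A : RNFAwtl Q α) : Prop :=
  (∃ q₀, A.I = {q₀}) ∧ (∀ q a, (A.δ q a).Subsingleton) ∧ ∀ q, (A.δend q).Subsingleton

end RNFAwtl

/-- A non-returning repetitive NFAwtl (nr-NFAwtl): the head continues from the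
position of the last deleted letter; on the end-of-tape marker it may change
state and return the head to the left end. -/
structure NrNFAwtl (Q α : Type) where
  τ : Q → Set α
  I : Set Q
  δ : Q → α → Set Q
  δend : Q → Set Q
  Facc : Set Q
  tr : ∀ q a, a ∈ τ q → δ q a = ∅
  accEnd : ∀ q, q ∈ Facc → δend q = ∅

namespace NrNFAwtl

variable {Q α : Type}

/-- Configurations are `(x, q, w)`: `x` is the already-skipped prefix, the head
is on the first letter of `w`. -/
def Step (A : NrNFAwtl Q α) :
    List α × Q × List α → List α × Q × List α → Prop := fun c c' =>
  (∃ u a v, c.2.2 = u ++ a :: v ∧ (∀ x ∈ u, x ∈ A.τ c.2.1) ∧ a ∉ A.τ c.2.1 ∧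
    c'.2.1 ∈ A.δ c.2.1 a ∧ c'.1 = c.1 ++ u ∧ c'.2.2 = v)
  ∨ ((∀ x ∈ c.2.2, x ∈ A.τ c.2.1) ∧ c'.2.1 ∈ A.δend c.2.1 ∧ c'.1 = [] ∧
    c'.2.2 = c.1 ++ c.2.2)

def Accepts (A : NrNFAwtl Q α) (w : List α) : Prop :=
  ∃ q₀ ∈ A.I, ∃ x q w', Relation.ReflTransGen A.Step ([], q₀, w) (x, q, w') ∧
    (∀ y ∈ w', y ∈ A.τ q) ∧ q ∈ A.Facc

def lang (A : NrNFAwtl Q α) : Set (List α) := { w | A.Accepts w }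

def Deterministic (A : NrNFAwtl Q α) : Prop :=
  (∃ q₀, A.I = {q₀}) ∧ (∀ q a, (A.δ q a).Subsingleton) ∧ ∀ q, (A.δend q).Subsingleton

end NrNFAwtl

/-- A non-repetitive non-returning NFAwtl (nr-nr-NFAwtl): non-returning, and it
must halt as soon as all remaining letters to the right are translucent. -/
structure NrnrNFAwtl (Q α : Type) where
  τ : Q → Set α
  I : Set Q
  F : Set Q
  δ : Q → α → Set Q
  tr : ∀ q a, a ∈ τ q → δ q a = ∅

namespace NrnrNFAwtl

variable {Q α : Type}

def Step (A : NrnrNFAwtl Q α) :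
    List α × Q × List α → List α × Q × List α → Prop := fun c c' =>
  ∃ u a v, c.2.2 = u ++ a :: v ∧ (∀ x ∈ u, x ∈ A.τ c.2.1) ∧ a ∉ A.τ c.2.1 ∧
    c'.2.1 ∈ A.δ c.2.1 a ∧ c'.1 = c.1 ++ u ∧ c'.2.2 = v

def Accepts (A : NrnrNFAwtl Q α) (w : List α) : Prop :=
  ∃ q₀ ∈ A.I, ∃ x q w', Relation.ReflTransGen A.Step ([], q₀, w) (x, q, w') ∧
    (∀ y ∈ w', y ∈ A.τ q) ∧ q ∈ A.F

def lang (A : NrnrNFAwtl Q α) : Set (List α) := { w | A.Accepts w }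

def Deterministic (A : NrnrNFAwtl Q α) : Prop :=
  (∃ q₀, A.I = {q₀}) ∧ ∀ q a, (A.δ q a).Subsingleton

end NrnrNFAwtl

/-- Language classes. -/
def NFAwtlLangs (α : Type) [Fintype α] : Set (Set (List α)) :=
  { L | ∃ (Q : Type) (_ : Fintype Q) (A : NFAwtl Q α), A.lang = L }

def DFAwtlLangs (α : Type) [Fintype α] : Set (Set (List α)) :=
  { L | ∃ (Q : Type) (_ : Fintype Q) (A : NFAwtl Q α), A.Deterministic ∧ A.lang = L }

def RNFAwtlLangs (α : Type) [Fintype α] : Set (Set (List α)) :=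
  { L | ∃ (Q : Type) (_ : Fintype Q) (A : RNFAwtl Q α), A.lang = L }

def RDFAwtlLangs (α : Type) [Fintype α] : Set (Set (List α)) :=
  { L | ∃ (Q : Type) (_ : Fintype Q) (A : RNFAwtl Q α), A.Deterministic ∧ A.lang = L }

def NrNFAwtlLangs (α : Type) [Fintype α] : Set (Set (List α)) :=
  { L | ∃ (Q : Type) (_ : Fintype Q) (A : NrNFAwtl Q α), A.lang = L }

def NrDFAwtlLangs (α : Type) [Fintype α] : Set (Set (List α)) :=
  { L | ∃ (Q : Type) (_ : Fintype Q) (A : NrNFAwtl Q α), A.Deterministic ∧ A.lang = L }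

def NrnrNFAwtlLangs (α : Type) [Fintype α] : Set (Set (List α)) :=
  { L | ∃ (Q : Type) (_ : Fintype Q) (A : NrnrNFAwtl Q α), A.lang = L }

def NrnrDFAwtlLangs (α : Type) [Fintype α] : Set (Set (List α)) :=
  { L | ∃ (Q : Type) (_ : Fintype Q) (A : NrnrNFAwtl Q α), A.Deterministic ∧ A.lang = L }

/-- The three-letter alphabet {a, b, c}. -/
inductive Al : Type
  | a | b | c
deriving DecidableEq

instance : Fintype Al where
  elems := {Al.a, Al.b, Al.c}
  complete := by intro x; cases x <;> simp

/-! An NFAwtl cannot test whether all remaining letters are translucent, as a `◁`-transition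
of an RNFAwtl requires. The simulating NFAwtl takes `◁`-transitions optimistically, folding
chains of them into the preceding reading transition (or into the choice of the initial state),
and records in its state a set `Γ` of letters still allowed on the tape: a `◁`-transition out
of `q` shrinks `Γ` to `Γ ∩ τ q`. Letters outside `Γ` are neither translucent for the simulator
nor readable by it, so a run whose optimism was unjustified gets stuck without accepting, while
a justified run keeps the tape inside `Γ` and halts exactly where the RNFAwtl does. -/

open Relation

namespace RNFAwtl

variable {Q α : Type} (A : RNFAwtl Q α)

def EndStep : Q × Set α → Q × Set α → Prop :=
  fun c c' => c'.1 ∈ A.δend c.1 ∧ c'.2 = c.2 ∩ A.τ c.1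

variable {A}

theorem snd_subset_of_reflTransGen_endStep {c d : Q × Set α}
    (h : ReflTransGen A.EndStep c d) : d.2 ⊆ c.2 := by
  induction h with
  | refl => exact subset_rfl
  | tail _ hbd ih => exact hbd.2 ▸ Set.inter_subset_left.trans ih

theorem reflTransGen_step_of_reflTransGen_endStep {c d : Q × Set α}
    (h : ReflTransGen A.EndStep c d) {w : List α} (hw : ∀ x ∈ w, x ∈ d.2) :
    ReflTransGen A.Step (c.1, w) (d.1, w) := by
  induction h with
  | refl => exact .refl
  | tail _ hbd ih =>
    rw [hbd.2] at hw
    exact (ih fun x hx => (hw x hx).1).tail (Or.inr ⟨fun x hx => (hw x hx).2, hbd.1, rfl⟩)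

variable (A)

def toNFAwtl : NFAwtl (Q × Set α) α where
  τ p := A.τ p.1 ∩ p.2
  I := {p | ∃ q₀ ∈ A.I, ReflTransGen A.EndStep (q₀, Set.univ) p}
  F := {p | p.1 ∈ A.Facc}
  δ p a := {p' | a ∈ p.2 ∧ a ∉ A.τ p.1 ∧ ∃ q' ∈ A.δ p.1 a, ReflTransGen A.EndStep (q', p.2) p'}
  tr _ _ ha := Set.eq_empty_of_forall_notMem fun _ h => h.2.1 ha.1

variable {A}

theorem reflTransGen_step_of_toNFAwtl_step {p p' : Q × Set α} {w w' : List α}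
    (h : A.toNFAwtl.Step (p, w) (p', w')) (hw' : ∀ x ∈ w', x ∈ p'.2) :
    ReflTransGen A.Step (p.1, w) (p'.1, w') ∧ ∀ x ∈ w, x ∈ p.2 := by
  obtain ⟨u, a, v, rfl, hu, -, ⟨ha, haτ, q', hq', hend⟩, rfl⟩ := h
  refine ⟨.head (Or.inl ⟨u, a, v, rfl, fun x hx => (hu x hx).1, haτ, hq', rfl⟩)
    (reflTransGen_step_of_reflTransGen_endStep hend hw'), fun x hx => ?_⟩
  simp only [List.mem_append, List.mem_cons] at hx
  rcases hx with hx | rfl | hx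
  · exact (hu x hx).2
  · exact ha
  · exact snd_subset_of_reflTransGen_endStep hend (hw' x (List.mem_append_right u hx))

theorem reflTransGen_step_of_reflTransGen_toNFAwtl_step {c d : (Q × Set α) × List α}
    (h : ReflTransGen A.toNFAwtl.Step c d) (hd : ∀ x ∈ d.2, x ∈ d.1.2) :
    ReflTransGen A.Step (c.1.1, c.2) (d.1.1, d.2) ∧ ∀ x ∈ c.2, x ∈ c.1.2 := by
  induction h using ReflTransGen.head_induction_on with
  | refl => exact ⟨.refl, hd⟩
  | head hstep _ ih =>
    obtain ⟨hrun, hinv⟩ := ih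
    obtain ⟨hrun', hinv'⟩ := reflTransGen_step_of_toNFAwtl_step hstep hinv
    exact ⟨hrun'.trans hrun, hinv'⟩

theorem toNFAwtl_step_of_read {q q' : Q} {Γ : Set α} {u v : List α} {a : α}
    (hu : ∀ x ∈ u, x ∈ A.τ q) (ha : a ∉ A.τ q) (hq' : q' ∈ A.δ q a)
    (hΓ : ∀ x ∈ u ++ a :: v, x ∈ Γ) {e : Q × Set α} (he : ReflTransGen A.EndStep (q', Γ) e) :
    A.toNFAwtl.Step ((q, Γ), u ++ a :: v) (e, u ++ v) :=
  ⟨u, a, v, rfl, fun x hx => ⟨hu x hx, hΓ x (by simp [hx])⟩, fun h => ha h.1,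
    ⟨hΓ a (by simp), ha, q', hq', he⟩, rfl⟩

theorem exists_reflTransGen_toNFAwtl_step {c d : Q × List α}
    (h : ReflTransGen A.Step c d) {Γ : Set α} (hΓ : ∀ x ∈ c.2, x ∈ Γ) :
    ∃ e, ReflTransGen A.EndStep (c.1, Γ) e ∧ ∃ Γ' : Set α,
      ReflTransGen A.toNFAwtl.Step (e, c.2) ((d.1, Γ'), d.2) ∧ ∀ x ∈ d.2, x ∈ Γ' := by
  induction h using ReflTransGen.head_induction_on generalizing Γ with
  | refl => exact ⟨(d.1, Γ), .refl, Γ, .refl, hΓ⟩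
  | @head c c₁ hstep _ ih =>
    obtain ⟨q, w⟩ := c
    obtain ⟨q₁, w₁⟩ := c₁
    rcases hstep with ⟨u, a, v, rfl, hu, ha, hq₁, rfl⟩ | ⟨hall, hend, rfl⟩
    · obtain ⟨e, he, Γ', hrun, hd⟩ := ih (Γ := Γ) fun x hx =>
        hΓ x (((List.sublist_cons_self a v).append_left u).subset hx)
      exact ⟨_, .refl, Γ', .head (toNFAwtl_step_of_read hu ha hq₁ hΓ he) hrun, hd⟩
    · obtain ⟨e, he, Γ', hrun, hd⟩ := ih (Γ := Γ ∩ A.τ q) fun x hx => ⟨hΓ x hx, hall x hx⟩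
      exact ⟨e, .head ⟨hend, rfl⟩ he, Γ', hrun, hd⟩

theorem lang_toNFAwtl : A.toNFAwtl.lang = A.lang := by
  ext w
  constructor
  · rintro ⟨p₀, ⟨q₀, hq₀, hinit⟩, p, w', hrun, htr, hF⟩
    obtain ⟨hrunA, hw⟩ := reflTransGen_step_of_reflTransGen_toNFAwtl_step (c := (p₀, w))
      (d := (p, w')) hrun fun x hx => (htr x hx).2
    exact ⟨q₀, hq₀, p.1, w', (reflTransGen_step_of_reflTransGen_endStep hinit hw).trans hrunA,
      fun x hx => (htr x hx).1, hF⟩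
  · rintro ⟨q₀, hq₀, q, w', hrun, htr, hF⟩
    obtain ⟨e, he, Γ', hrunN, hd⟩ :=
      exists_reflTransGen_toNFAwtl_step (c := (q₀, w)) (d := (q, w')) hrun (Γ := Set.univ)
        fun x _ => Set.mem_univ x
    exact ⟨e, ⟨q₀, hq₀, he⟩, (q, Γ'), w', hrunN, fun x hx => ⟨htr x hx, hd x hx⟩, hF⟩

end RNFAwtl

namespace NFAwtl

variable {Q α : Type} (A : NFAwtl Q α)

def toRNFAwtl : RNFAwtl Q α where
  τ := A.τ
  I := A.I
  δ := A.δ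
  δend _ := ∅
  Facc := A.F
  tr := A.tr
  accEnd _ _ := rfl

theorem toRNFAwtl_step : A.toRNFAwtl.Step = A.Step := by
  funext c c'
  simp [RNFAwtl.Step, NFAwtl.Step, toRNFAwtl]

theorem lang_toRNFAwtl : A.toRNFAwtl.lang = A.lang := by
  ext w
  simp only [RNFAwtl.lang, RNFAwtl.Accepts, toRNFAwtl_step]
  rfl

end NFAwtl

/-- ℒ(RNFAwtl) = ℒ(NFAwtl). -/
theorem RNFAwtl_eq_NFAwtl (α : Type) [Fintype α] :
    RNFAwtlLangs α = NFAwtlLangs α := by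
  ext L
  constructor
  · rintro ⟨Q, _, A, rfl⟩
    exact ⟨Q × Set α, Fintype.ofFinite _, A.toNFAwtl, A.lang_toNFAwtl⟩
  · rintro ⟨Q, _, A, rfl⟩
    exact ⟨Q, ‹_›, A.toRNFAwtl, A.lang_toRNFAwtl⟩
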